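/- Confluence of logical retraction: for any translated program rule rf and the kill rule, every critical pair between rf and kill is joinable: applying rf first and then exhaustively applying kill(f) and revive for the killed justification f reaches a state equivalent to the one obtained by applying kill(f) directly to the overlap. -/

import Mathlib

variable {C J : Type*} [DecidableEq C] [DecidableEq J]

/-- Annotated constraints of CHR with justifications, including the reserved
`rem` and `kill` constraints. `user c F` is a (non-reserved) constraint `c`
annotated with justification set `F`; `rem c Fc F` remembers the removed
constraint `c^{Fc}` and is itself annotated with `F`; `kill f` requests
logical retraction of justification `f`. -/
inductive AC (C J : Type*) where
  | user : C → Finset J → AC C J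
  | rem : C → Finset J → Finset J → AC C J
  | kill : J → AC C J
deriving DecidableEq

/-- The kill rule: `kill(f) \ G^F ⇔ f ∈ F | true`, for non-reserved `G`. -/
def KillStep (S T : Multiset (AC C J)) : Prop :=
  ∃ (f : J) (c : C) (F : Finset J) (G : Multiset (AC C J)),
    f ∈ F ∧ S = AC.kill f ::ₘ AC.user c F ::ₘ G ∧ T = AC.kill f ::ₘ G

/-- The revive rule: `kill(f) \ rem(G^{F_c})^F ⇔ f ∈ F | G^{F_c}`. -/
def ReviveStep (S T : Multiset (AC C J)) : Prop :=
  ∃ (f : J) (c : C) (Fc F : Finset J) (G : Multiset (AC C J)),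
    f ∈ F ∧ S = AC.kill f ::ₘ AC.rem c Fc F ::ₘ G ∧
      T = AC.kill f ::ₘ AC.user c Fc ::ₘ G

/-- A state contains at most one `kill(f)` constraint per justification `f`. -/
def AtMostOneKill (S : Multiset (AC C J)) : Prop :=
  ∀ f : J, S.count (AC.kill f) ≤ 1

/-- A simpagation rule: kept head, removed head, guard and body (no built-in
constraints in the body, no reserved symbols in the head). -/
structure Rule (C : Type*) where
  kept : Multiset C
  removed : Multiset C
  guard : Prop
  body : Multiset C

/-- Transition with the translated rule `rf` of a program rule `r`: removed
constraints are remembered via `rem`, and all produced constraints are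
annotated with the union `F` of the head justification sets. -/
def JStep (r : Rule C) (S T : Multiset (AC C J)) : Prop :=
  r.guard ∧ ∃ (K R : Multiset (C × Finset J)) (G : Multiset (AC C J)),
    K.map Prod.fst = r.kept ∧ R.map Prod.fst = r.removed ∧
    S = K.map (fun p => AC.user p.1 p.2) +
        R.map (fun p => AC.user p.1 p.2) + G ∧
    T = K.map (fun p => AC.user p.1 p.2) +
        R.map (fun p => AC.rem p.1 p.2
          ((K.map Prod.snd).sup ∪ (R.map Prod.snd).sup)) +
        r.body.map (fun b => AC.user b
          ((K.map Prod.snd).sup ∪ (R.map Prod.snd).sup)) + G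

/-!
If the constraint removed by `kill(f)` is not a head of `rf`, the two steps act on disjoint
parts of the state and commute. Otherwise `f ∈ F_c ⊆ F`, where `F` is the union of the head
justifications, and `kill(f)` undoes the firing of `rf`: everything `rf` produced is annotated
with `F`, so revive restores its removed heads and kill deletes its body. This returns to the
overlap state, from which the kill step itself closes the critical pair.
-/

open Relation

def RetractionStep (r : Rule C) (S T : Multiset (AC C J)) : Prop :=
  JStep r S T ∨ KillStep S T ∨ ReviveStep S T

omit [DecidableEq C] [DecidableEq J] in
theorem KillStep.add_left {S T : Multiset (AC C J)} (h : KillStep S T) (X : Multiset (AC C J)) :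
    KillStep (X + S) (X + T) := by
  obtain ⟨f, c, F, G, hf, rfl, rfl⟩ := h
  exact ⟨f, c, F, X + G, hf, by simp only [Multiset.add_cons], by simp only [Multiset.add_cons]⟩

omit [DecidableEq C] [DecidableEq J] in
theorem killStep_reflTransGen_map_user {f : J} {F : Finset J} (hf : f ∈ F) (B : Multiset C)
    (X : Multiset (AC C J)) :
    ReflTransGen KillStep (AC.kill f ::ₘ (B.map (AC.user · F) + X)) (AC.kill f ::ₘ X) := by
  induction B using Multiset.induction with
  | empty => rw [Multiset.map_zero, zero_add]
  | cons c B ih =>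
    refine .head ⟨f, c, F, B.map (AC.user · F) + X, hf, ?_, rfl⟩ ih
    rw [Multiset.map_cons, Multiset.cons_add]

omit [DecidableEq C] [DecidableEq J] in
theorem reviveStep_reflTransGen_map_rem {f : J} {F : Finset J} (hf : f ∈ F)
    (R : Multiset (C × Finset J)) (X : Multiset (AC C J)) :
    ReflTransGen ReviveStep (AC.kill f ::ₘ (R.map (fun p => AC.rem p.1 p.2 F) + X))
      (AC.kill f ::ₘ (R.map (fun p => AC.user p.1 p.2) + X)) := by
  induction R using Multiset.induction generalizing X with
  | empty => exact .refl
  | cons p R ih =>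
    refine .head ⟨f, p.1, p.2, F, R.map (fun p => AC.rem p.1 p.2 F) + X, hf, ?_, rfl⟩ ?_
    · rw [Multiset.map_cons, Multiset.cons_add]
    · simpa only [Multiset.map_cons, Multiset.cons_add, Multiset.add_cons] using
        ih (AC.user p.1 p.2 ::ₘ X)

omit [DecidableEq C] in
theorem retractionStep_reflTransGen_undo_firing (r : Rule C) {f : J} {F : Finset J} (hf : f ∈ F)
    (X : Multiset (AC C J)) (R : Multiset (C × Finset J)) (B : Multiset C)
    (G : Multiset (AC C J)) :
    ReflTransGen (RetractionStep r)
      (X + R.map (fun p => AC.rem p.1 p.2 F) + B.map (AC.user · F) + AC.kill f ::ₘ G)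
      (X + R.map (fun p => AC.user p.1 p.2) + AC.kill f ::ₘ G) := by
  have hkill := ReflTransGen.mono (p := RetractionStep r) (fun _ _ => Or.inr ∘ Or.inl) _ _
    (killStep_reflTransGen_map_user hf B (R.map (fun p => AC.rem p.1 p.2 F) + (X + G)))
  have hrevive := ReflTransGen.mono (p := RetractionStep r) (fun _ _ => Or.inr ∘ Or.inr) _ _
    (reviveStep_reflTransGen_map_rem hf R (X + G))
  convert hkill.trans hrevive using 1 <;> simp only [Multiset.add_cons] <;> congr 1 <;> abel

omit [DecidableEq C] in
theorem subset_sup_union_of_user_mem {K R : Multiset (C × Finset J)} {c : C} {Fc : Finset J}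
    (h : AC.user c Fc ∈ K.map (fun p => AC.user p.1 p.2) + R.map (fun p => AC.user p.1 p.2)) :
    Fc ⊆ (K.map Prod.snd).sup ∪ (R.map Prod.snd).sup := by
  simp only [Multiset.mem_add, Multiset.mem_map, AC.user.injEq] at h
  rcases h with ⟨p, hp, rfl, rfl⟩ | ⟨p, hp, rfl, rfl⟩
  · exact Finset.subset_union_left.trans' (Multiset.le_sup (Multiset.mem_map_of_mem _ hp))
  · exact Finset.subset_union_right.trans' (Multiset.le_sup (Multiset.mem_map_of_mem _ hp))

theorem retraction_confluent_general (r : Rule C) (S T₁ T₂ : Multiset (AC C J))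
    (h₁ : JStep r S T₁) (h₂ : KillStep S T₂) :
    ∃ U₁ U₂ : Multiset (AC C J),
      Relation.ReflTransGen
        (fun a b => JStep r a b ∨ KillStep a b ∨ ReviveStep a b) T₁ U₁ ∧
      Relation.ReflTransGen
        (fun a b => JStep r a b ∨ KillStep a b ∨ ReviveStep a b) T₂ U₂ ∧
      U₁ = U₂ := by
  obtain ⟨hg, K, R, G, hK, hR, rfl, rfl⟩ := h₁
  have ⟨f, c, Fc, G₂, hf, hS, hT₂⟩ := h₂
  have hkill : AC.kill f ∈ G := by
    have := Multiset.mem_cons_self (AC.kill f) (AC.user c Fc ::ₘ G₂)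
    simpa [← hS] using this
  obtain ⟨G', rfl⟩ := Multiset.exists_cons_of_mem hkill
  have huser : AC.user c Fc ∈ K.map (fun p => AC.user p.1 p.2) +
      R.map (fun p => AC.user p.1 p.2) + AC.kill f ::ₘ G' := by
    rw [hS]; exact Multiset.mem_cons_of_mem (Multiset.mem_cons_self _ _)
  rcases Multiset.mem_add.mp huser with hhead | hctx
  · have hfF := subset_sup_union_of_user_mem hhead hf
    exact ⟨T₂, T₂, (retractionStep_reflTransGen_undo_firing r hfF _ R r.body G').tail
      (Or.inr (Or.inl h₂)), .refl, rfl⟩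
  · obtain ⟨G'', rfl⟩ := Multiset.exists_cons_of_mem (by simpa using hctx)
    simp only [Multiset.add_cons, Multiset.cons_inj_right] at hS
    refine ⟨_, _, .single (Or.inr (Or.inl (KillStep.add_left ⟨f, c, Fc, G'', hf, rfl, rfl⟩ _))),
      .single (Or.inl ⟨hg, K, R, AC.kill f ::ₘ G'', hK, hR, ?_, rfl⟩), rfl⟩
    rw [hT₂, ← hS, Multiset.add_cons]

/-- Confluence of logical retraction: every critical pair between a translated
program rule `rf` and the kill rule is joinable using the translated rule, the
kill rule and the revive rule (assuming at most one `kill(f)` per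
justification). -/
theorem retraction_confluent (r : Rule C) (S T₁ T₂ : Multiset (AC C J))
    (hS : AtMostOneKill S) (h₁ : JStep r S T₁) (h₂ : KillStep S T₂) :
    ∃ U₁ U₂ : Multiset (AC C J),
      Relation.ReflTransGen
        (fun a b => JStep r a b ∨ KillStep a b ∨ ReviveStep a b) T₁ U₁ ∧
      Relation.ReflTransGen
        (fun a b => JStep r a b ∨ KillStep a b ∨ ReviveStep a b) T₂ U₂ ∧
      U₁ = U₂ :=
  retraction_confluent_general r S T₁ T₂ h₁ h₂
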